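/- Define h(ω) := 1 − √π·ω·exp(ω²)·erfc(ω), whose derivative is h'(ω) = 2ω − √π·(1 + 2ω²)·exp(ω²)·erfc(ω). Then for every ω ≥ 0: 2ω − 2(1 + 2ω²)/(ω + √(ω² + 4/π)) ≤ h'(ω) ≤ 2ω − 2(1 + 2ω²)/(ω + √(ω² + 2)). -/

import Mathlib

open Real MeasureTheory Set

/-- The complementary error function. -/
noncomputable def erfc (z : ℝ) : ℝ :=
  (2 / Real.sqrt π) * ∫ u in Set.Ioi z, Real.exp (-u ^ 2)

/-- `h(ω) = 1 − √π · ω · exp(ω²) · erfc(ω)`. -/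
noncomputable def hfun (ω : ℝ) : ℝ :=
  1 - Real.sqrt π * ω * Real.exp (ω ^ 2) * erfc ω

/-!
Since `h'(ω) = 2ω - (1 + 2ω²) · √π e^{ω²} erfc ω`, the bounds are Komatsu's estimates
`2 / (x + √(x² + 2)) ≤ √π e^{x²} erfc x ≤ 2 / (x + √(x² + 4/π))` for `x ≥ 0`.
Writing `G(x) = ∫_x^∞ e^{-u²} du`, both come from the gap `g_c(x) = e^{-x²} / (x + √(x² + c)) - G(x)`:
it tends to `0` at infinity, and on `[0, ∞)` its derivative has the sign of `(c - 1)² - (2 - c) x²`.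
For `c = 2` the gap increases, hence stays `≤ 0`. For `c = 4/π` it vanishes at `0`, then increases and
finally decreases, hence stays `≥ 0`.
-/

open Filter Topology

section TailIntegral

variable {f : ℝ → ℝ}

theorem integral_Ioi_eq_sub_intervalIntegral (hf : Integrable f) (a x : ℝ) :
    ∫ u in Ioi x, f u = (∫ u in Ioi a, f u) - ∫ u in a..x, f u :=
  eq_sub_of_add_eq' (intervalIntegral.integral_interval_add_Ioi hf.integrableOn hf.integrableOn)

theorem hasDerivAt_integral_Ioi (hf : Integrable f) (hc : Continuous f) (x : ℝ) :
    HasDerivAt (fun y => ∫ u in Ioi y, f u) (-f x) x := by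
  have hint : HasDerivAt (fun y => ∫ u in (0 : ℝ)..y, f u) (f x) x :=
    intervalIntegral.integral_hasDerivAt_right (hc.intervalIntegrable _ _)
      (hc.stronglyMeasurableAtFilter _ _) hc.continuousAt
  rw [funext (integral_Ioi_eq_sub_intervalIntegral hf 0)]
  exact hint.const_sub _

theorem tendsto_integral_Ioi_atTop (hf : Integrable f) :
    Tendsto (fun y => ∫ u in Ioi y, f u) atTop (𝓝 0) := by
  have h := (tendsto_const_nhds (x := ∫ u in Ioi 0, f u)).sub
    (intervalIntegral_tendsto_integral_Ioi 0 hf.integrableOn tendsto_id)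
  rw [sub_self] at h
  rw [funext (integral_Ioi_eq_sub_intervalIntegral hf 0)]
  exact h

end TailIntegral

noncomputable def gaussTail (x : ℝ) : ℝ := ∫ u in Ioi x, exp (-u ^ 2)

theorem integrable_exp_neg_sq : Integrable fun u : ℝ => exp (-u ^ 2) := by
  simpa using integrable_exp_neg_mul_sq one_pos

theorem hasDerivAt_gaussTail (x : ℝ) : HasDerivAt gaussTail (-exp (-x ^ 2)) x :=
  hasDerivAt_integral_Ioi integrable_exp_neg_sq (by fun_prop) x

theorem tendsto_gaussTail_atTop : Tendsto gaussTail atTop (𝓝 0) :=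
  tendsto_integral_Ioi_atTop integrable_exp_neg_sq

theorem gaussTail_zero : gaussTail 0 = √π / 2 := by
  simpa [gaussTail] using integral_gaussian_Ioi 1

theorem erfc_eq_gaussTail (x : ℝ) : erfc x = 2 / √π * gaussTail x := rfl

theorem hasDerivAt_erfc (x : ℝ) : HasDerivAt erfc (-(2 / √π) * exp (-x ^ 2)) x := by
  rw [funext erfc_eq_gaussTail, neg_mul, ← mul_neg]
  exact (hasDerivAt_gaussTail x).const_mul _

theorem hasDerivAt_hfun (ω : ℝ) :
    HasDerivAt hfun (2 * ω - √π * (1 + 2 * ω ^ 2) * exp (ω ^ 2) * erfc ω) ω := by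
  have hexp : HasDerivAt (fun y => exp (y ^ 2)) (exp (ω ^ 2) * (2 * ω)) ω := by
    simpa using (hasDerivAt_pow 2 ω).exp
  have hlin : HasDerivAt (fun y => √π * y) √π ω := by simpa using (hasDerivAt_id ω).const_mul √π
  have := ((hlin.mul hexp).mul (hasDerivAt_erfc ω)).const_sub 1
  refine this.congr_deriv ?_
  simp only [Pi.mul_apply]
  have hπ : √π ≠ 0 := by positivity
  have hee : exp (ω ^ 2) * exp (-ω ^ 2) = 1 := by rw [← exp_add]; simp
  field_simp
  linear_combination (2 * ω) * hee

theorem add_sqrt_sq_add_pos {c : ℝ} (hc : 0 < c) (x : ℝ) : 0 < x + √(x ^ 2 + c) := by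
  have : |x| < √(x ^ 2 + c) := by
    rw [lt_sqrt (abs_nonneg x), sq_abs]
    linarith
  linarith [neg_abs_le x]

noncomputable def komatsuGap (c x : ℝ) : ℝ := exp (-x ^ 2) / (x + √(x ^ 2 + c)) - gaussTail x

section KomatsuGap

variable {c : ℝ}

theorem hasDerivAt_komatsuGap (hc : 0 < c) (x : ℝ) :
    HasDerivAt (komatsuGap c)
      (exp (-x ^ 2) * (x ^ 2 + c - 1 - x * √(x ^ 2 + c)) /
        (√(x ^ 2 + c) * (x + √(x ^ 2 + c)))) x := by
  have hq : 0 < x ^ 2 + c := by positivity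
  have hD := add_sqrt_sq_add_pos hc x
  have hexp : HasDerivAt (fun y => exp (-y ^ 2)) (exp (-x ^ 2) * -(2 * x)) x := by
    simpa using ((hasDerivAt_pow 2 x).neg).exp
  have hsqrt : HasDerivAt (fun y => √(y ^ 2 + c)) (2 * x / (2 * √(x ^ 2 + c))) x := by
    simpa using ((hasDerivAt_pow 2 x).add_const c).sqrt hq.ne'
  have := (hexp.div ((hasDerivAt_id x).add hsqrt) hD.ne').sub (hasDerivAt_gaussTail x)
  refine this.congr_deriv ?_
  have hs := sq_sqrt hq.le
  have hs0 : √(x ^ 2 + c) ≠ 0 := (sqrt_pos.2 hq).ne'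
  simp only [Pi.add_apply, id_eq]
  field_simp
  linear_combination (x + √(x ^ 2 + c)) * hs

theorem tendsto_komatsuGap_atTop (hc : 0 < c) : Tendsto (komatsuGap c) atTop (𝓝 0) := by
  have hquot : Tendsto (fun x => exp (-x ^ 2) / (x + √(x ^ 2 + c))) atTop (𝓝 0) := by
    refine squeeze_zero' (.of_forall fun x => (div_pos (exp_pos _) (add_sqrt_sq_add_pos hc x)).le)
      ?_ tendsto_inv_atTop_zero
    filter_upwards [eventually_gt_atTop 0] with x hx
    have hexp : exp (-x ^ 2) ≤ 1 := exp_le_one_iff.2 (by nlinarith)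
    calc exp (-x ^ 2) / (x + √(x ^ 2 + c)) ≤ 1 / x :=
          div_le_div₀ zero_le_one hexp hx (le_add_of_nonneg_right (sqrt_nonneg _))
      _ = x⁻¹ := one_div x
  have := hquot.sub tendsto_gaussTail_atTop
  rwa [sub_zero] at this

theorem komatsu_numerator_mul_eq (hc : 0 ≤ c) (x : ℝ) :
    (x ^ 2 + c - 1 - x * √(x ^ 2 + c)) * (x ^ 2 + c - 1 + x * √(x ^ 2 + c)) =
      (c - 1) ^ 2 - (2 - c) * x ^ 2 := by
  linear_combination (-x ^ 2) * sq_sqrt (by positivity : 0 ≤ x ^ 2 + c)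

theorem komatsu_numerator_conj_pos (hc : 1 < c) {x : ℝ} (hx : 0 ≤ x) :
    0 < x ^ 2 + c - 1 + x * √(x ^ 2 + c) := by
  have := mul_nonneg hx (sqrt_nonneg (x ^ 2 + c))
  nlinarith [sq_nonneg x]

theorem komatsu_numerator_nonneg_iff (hc : 1 < c) {x : ℝ} (hx : 0 ≤ x) :
    0 ≤ x ^ 2 + c - 1 - x * √(x ^ 2 + c) ↔ (2 - c) * x ^ 2 ≤ (c - 1) ^ 2 := by
  rw [← mul_nonneg_iff_of_pos_right (komatsu_numerator_conj_pos hc hx),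
    komatsu_numerator_mul_eq (by linarith), sub_nonneg]

theorem komatsu_numerator_nonpos_iff (hc : 1 < c) {x : ℝ} (hx : 0 ≤ x) :
    x ^ 2 + c - 1 - x * √(x ^ 2 + c) ≤ 0 ↔ (c - 1) ^ 2 ≤ (2 - c) * x ^ 2 := by
  rw [← mul_le_mul_iff_left₀ (komatsu_numerator_conj_pos hc hx), zero_mul,
    komatsu_numerator_mul_eq (by linarith), sub_nonpos]

theorem continuous_komatsuGap (hc : 0 < c) : Continuous (komatsuGap c) :=
  continuous_iff_continuousAt.2 fun x => (hasDerivAt_komatsuGap hc x).continuousAt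

theorem monotoneOn_komatsuGap (hc : 1 < c) {s : Set ℝ} (hs : Convex ℝ s) (hs0 : s ⊆ Ici 0)
    (h : ∀ x ∈ s, (2 - c) * x ^ 2 ≤ (c - 1) ^ 2) : MonotoneOn (komatsuGap c) s := by
  have hc0 : 0 < c := by linarith
  refine monotoneOn_of_hasDerivWithinAt_nonneg hs (continuous_komatsuGap hc0).continuousOn
    (fun x _ => (hasDerivAt_komatsuGap hc0 x).hasDerivWithinAt) fun x hx => ?_
  have hxs := interior_subset hx
  have hN := (komatsu_numerator_nonneg_iff hc (hs0 hxs)).2 (h x hxs)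
  exact div_nonneg (mul_nonneg (exp_pos _).le hN)
    (mul_nonneg (sqrt_nonneg _) (add_sqrt_sq_add_pos hc0 x).le)

theorem antitoneOn_komatsuGap (hc : 1 < c) {s : Set ℝ} (hs : Convex ℝ s) (hs0 : s ⊆ Ici 0)
    (h : ∀ x ∈ s, (c - 1) ^ 2 ≤ (2 - c) * x ^ 2) : AntitoneOn (komatsuGap c) s := by
  have hc0 : 0 < c := by linarith
  refine antitoneOn_of_hasDerivWithinAt_nonpos hs (continuous_komatsuGap hc0).continuousOn
    (fun x _ => (hasDerivAt_komatsuGap hc0 x).hasDerivWithinAt) fun x hx => ?_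
  have hxs := interior_subset hx
  have hN := (komatsu_numerator_nonpos_iff hc (hs0 hxs)).2 (h x hxs)
  exact div_nonpos_of_nonpos_of_nonneg (mul_nonpos_of_nonneg_of_nonpos (exp_pos _).le hN)
    (mul_nonneg (sqrt_nonneg _) (add_sqrt_sq_add_pos hc0 x).le)

end KomatsuGap

theorem nonneg_of_monotoneOn_Icc_of_antitoneOn_Ici {f : ℝ → ℝ} {a b x : ℝ} (hab : a ≤ b)
    (hmono : MonotoneOn f (Icc a b)) (hanti : AntitoneOn f (Ici b)) (ha : 0 ≤ f a)
    (hf : Tendsto f atTop (𝓝 0)) (hx : a ≤ x) : 0 ≤ f x := by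
  rcases le_total x b with hxb | hbx
  · exact ha.trans (hmono ⟨le_rfl, hab⟩ ⟨hx, hxb⟩ hx)
  · exact le_of_tendsto hf (eventually_atTop.2 ⟨x, fun y hy => hanti hbx (hbx.trans hy) hy⟩)

theorem komatsuGap_two_nonpos {x : ℝ} (hx : 0 ≤ x) : komatsuGap 2 x ≤ 0 := by
  have hmono : MonotoneOn (komatsuGap 2) (Ici 0) :=
    monotoneOn_komatsuGap one_lt_two (convex_Ici 0) subset_rfl fun _ _ => by norm_num
  exact ge_of_tendsto (tendsto_komatsuGap_atTop two_pos)
    (eventually_atTop.2 ⟨x, fun y hy => hmono hx (hx.trans hy) hy⟩)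

theorem komatsuGap_nonneg {c : ℝ} (hc1 : 1 < c) (hc2 : c < 2) (h0 : 0 ≤ komatsuGap c 0)
    {x : ℝ} (hx : 0 ≤ x) : 0 ≤ komatsuGap c x := by
  obtain ⟨b, hb0, hb⟩ : ∃ b, 0 ≤ b ∧ (2 - c) * b ^ 2 = (c - 1) ^ 2 := by
    refine ⟨(c - 1) / √(2 - c), div_nonneg (by linarith) (sqrt_nonneg _), ?_⟩
    rw [div_pow, sq_sqrt (by linarith)]
    field_simp [(by linarith : (2 - c) ≠ 0)]
  have h2c : 0 ≤ 2 - c := by linarith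
  refine nonneg_of_monotoneOn_Icc_of_antitoneOn_Ici hb0
    (monotoneOn_komatsuGap hc1 (convex_Icc 0 b) (fun y hy => hy.1) fun y hy => ?_)
    (antitoneOn_komatsuGap hc1 (convex_Ici b) (fun y hy => hb0.trans hy) fun y hy => ?_)
    h0 (tendsto_komatsuGap_atTop (by linarith)) hx
  · exact hb ▸ mul_le_mul_of_nonneg_left (pow_le_pow_left₀ hy.1 hy.2 2) h2c
  · exact hb ▸ mul_le_mul_of_nonneg_left (pow_le_pow_left₀ hb0 hy 2) h2c

theorem one_lt_four_div_pi : 1 < 4 / π := by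
  rw [lt_div_iff₀ pi_pos]
  linarith [pi_lt_four]

theorem four_div_pi_lt_two : 4 / π < 2 := by
  rw [div_lt_iff₀ pi_pos]
  linarith [pi_gt_three]

theorem komatsuGap_four_div_pi_zero : komatsuGap (4 / π) 0 = 0 := by
  have hsqrt : √(4 / π) = 2 / √π := by
    rw [sqrt_div' _ pi_pos.le, show (4 : ℝ) = 2 ^ 2 by norm_num, sqrt_sq zero_le_two]
  rw [komatsuGap, gaussTail_zero]
  norm_num [hsqrt]

theorem exp_neg_sq_div_le_gaussTail {x : ℝ} (hx : 0 ≤ x) :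
    exp (-x ^ 2) / (x + √(x ^ 2 + 2)) ≤ gaussTail x :=
  sub_nonpos.1 (komatsuGap_two_nonpos hx)

theorem gaussTail_le_exp_neg_sq_div {x : ℝ} (hx : 0 ≤ x) :
    gaussTail x ≤ exp (-x ^ 2) / (x + √(x ^ 2 + 4 / π)) :=
  sub_nonneg.1 (komatsuGap_nonneg one_lt_four_div_pi four_div_pi_lt_two
    komatsuGap_four_div_pi_zero.ge hx)

theorem sqrt_pi_mul_exp_sq_mul_erfc (x : ℝ) :
    √π * exp (x ^ 2) * erfc x = 2 * exp (x ^ 2) * gaussTail x := by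
  have hπ : √π ≠ 0 := (sqrt_pos.2 pi_pos).ne'
  rw [erfc_eq_gaussTail]
  field_simp

theorem two_div_le_sqrt_pi_mul_exp_sq_mul_erfc {x : ℝ} (hx : 0 ≤ x) :
    2 / (x + √(x ^ 2 + 2)) ≤ √π * exp (x ^ 2) * erfc x := by
  calc 2 / (x + √(x ^ 2 + 2)) = 2 * exp (x ^ 2) * (exp (-x ^ 2) / (x + √(x ^ 2 + 2))) := by
        rw [exp_neg]; field_simp
    _ ≤ 2 * exp (x ^ 2) * gaussTail x := by gcongr; exact exp_neg_sq_div_le_gaussTail hx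
    _ = √π * exp (x ^ 2) * erfc x := (sqrt_pi_mul_exp_sq_mul_erfc x).symm

theorem sqrt_pi_mul_exp_sq_mul_erfc_le_two_div {x : ℝ} (hx : 0 ≤ x) :
    √π * exp (x ^ 2) * erfc x ≤ 2 / (x + √(x ^ 2 + 4 / π)) := by
  calc √π * exp (x ^ 2) * erfc x = 2 * exp (x ^ 2) * gaussTail x := sqrt_pi_mul_exp_sq_mul_erfc x
    _ ≤ 2 * exp (x ^ 2) * (exp (-x ^ 2) / (x + √(x ^ 2 + 4 / π))) := by
        gcongr; exact gaussTail_le_exp_neg_sq_div hx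
    _ = 2 / (x + √(x ^ 2 + 4 / π)) := by rw [exp_neg]; field_simp

theorem hfun_deriv_bounds :
    (∀ ω : ℝ, deriv hfun ω =
      2 * ω - Real.sqrt π * (1 + 2 * ω ^ 2) * Real.exp (ω ^ 2) * erfc ω) ∧
    ∀ ω : ℝ, 0 ≤ ω →
      2 * ω - 2 * (1 + 2 * ω ^ 2) / (ω + Real.sqrt (ω ^ 2 + 4 / π)) ≤ deriv hfun ω ∧
        deriv hfun ω ≤ 2 * ω - 2 * (1 + 2 * ω ^ 2) / (ω + Real.sqrt (ω ^ 2 + 2)) := by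
  have hderiv (ω : ℝ) := (hasDerivAt_hfun ω).deriv
  refine ⟨hderiv, fun ω hω => ?_⟩
  have hfactor (a : ℝ) : 2 * ω - 2 * (1 + 2 * ω ^ 2) / a = 2 * ω - (1 + 2 * ω ^ 2) * (2 / a) := by
    ring
  rw [hderiv, hfactor, hfactor, show √π * (1 + 2 * ω ^ 2) * exp (ω ^ 2) * erfc ω =
    (1 + 2 * ω ^ 2) * (√π * exp (ω ^ 2) * erfc ω) by ring]
  have hlower := sqrt_pi_mul_exp_sq_mul_erfc_le_two_div hω
  have hupper := two_div_le_sqrt_pi_mul_exp_sq_mul_erfc hω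
  constructor <;> gcongr
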